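/- Let q ≥ 2, n ≥ 1 and let D_1, D_2 ⊆ {1,…,n}. The chromatic numbers of the distance graphs G(Z_q^n, D_1) and G(Z_q^n, D_2) are equal if and only if |D_1| = |D_2|. -/

import Mathlib

/-- The Rosenbloom–Tsfasman weight of a vector in `Z_q^n`:
the largest (1-based) index `i` with `x i ≠ 0`, and `0` for the zero vector. -/
def rtWeight {q n : ℕ} (x : Fin n → ZMod q) : ℕ :=
  (Finset.univ.filter fun i => x i ≠ 0).sup fun i => i.val + 1

/-- The Rosenbloom–Tsfasman distance on `Z_q^n`: `ρ(x,y) = ω(x - y)`. -/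
def rtDist {q n : ℕ} (x y : Fin n → ZMod q) : ℕ := rtWeight (x - y)

/-- The distance graph `G(Z_q^n, D)`: distinct `x, y` are adjacent iff `ρ(x,y) ∈ D`. -/
def rtGraph (q n : ℕ) (D : Finset ℕ) : SimpleGraph (Fin n → ZMod q) :=
  SimpleGraph.fromRel fun x y => rtDist x y ∈ D

/-!
Only the coordinates `i` with `i + 1 ∈ D` matter: two vectors are adjacent in `G(Z_q^n, D)` exactly
when they differ and their last differing coordinate is one of these. Restricting a vector to these
coordinates is therefore a proper colouring with `q ^ |D|` colours, while the vectors supported on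
them form a clique of the same size.
-/

lemma SimpleGraph.chromaticNumber_eq_card_of_coloring_of_hom {V α : Type*} [Fintype α]
    {G : SimpleGraph V} (C : G.Coloring α) (f : (⊤ : SimpleGraph α) →g G) :
    G.chromaticNumber = Fintype.card α :=
  le_antisymm C.colorable.chromaticNumber_le
    (chromaticNumber_top (V := α) ▸ chromaticNumber_mono_of_hom f)

def rtCoords (n : ℕ) (D : Finset ℕ) : Finset (Fin n) :=
  Finset.univ.filter fun i => i.val + 1 ∈ D

lemma card_rtCoords {n : ℕ} {D : Finset ℕ} (hD : D ⊆ Finset.Icc 1 n) :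
    (rtCoords n D).card = D.card := by
  refine Finset.card_nbij (fun i => i.val + 1) (fun i hi => (Finset.mem_filter.mp hi).2)
    (fun i _ j _ h => Fin.ext (by simpa using h)) fun d hd => ?_
  have hd' := Finset.mem_Icc.mp (hD hd)
  exact ⟨⟨d - 1, by omega⟩, by simpa [rtCoords, Nat.sub_add_cancel hd'.1] using hd, by simp; omega⟩

lemma exists_rtWeight_eq {q n : ℕ} {x : Fin n → ZMod q} (hx : x ≠ 0) :
    ∃ i : Fin n, x i ≠ 0 ∧ rtWeight x = i.val + 1 := by
  have hne : (Finset.univ.filter fun i => x i ≠ 0).Nonempty := by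
    obtain ⟨i, hi⟩ := Function.ne_iff.mp hx
    exact ⟨i, by simpa using hi⟩
  obtain ⟨i, hi, hsup⟩ := Finset.exists_mem_eq_sup _ hne fun i : Fin n => i.val + 1
  exact ⟨i, (Finset.mem_filter.mp hi).2, hsup⟩

lemma rtWeight_mem_of_forall {q n : ℕ} {x : Fin n → ZMod q} {D : Finset ℕ} (hx : x ≠ 0)
    (h : ∀ i : Fin n, x i ≠ 0 → i.val + 1 ∈ D) : rtWeight x ∈ D := by
  obtain ⟨i, hi, hw⟩ := exists_rtWeight_eq hx
  exact hw ▸ h i hi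

lemma rtDist_comm {q n : ℕ} (x y : Fin n → ZMod q) : rtDist x y = rtDist y x := by
  rw [rtDist, rtDist, ← neg_sub, rtWeight, rtWeight]
  simp only [Pi.neg_apply, ne_eq, neg_eq_zero]

lemma rtGraph_adj {q n : ℕ} {D : Finset ℕ} {x y : Fin n → ZMod q} :
    (rtGraph q n D).Adj x y ↔ x ≠ y ∧ rtDist x y ∈ D := by
  rw [rtGraph, SimpleGraph.fromRel_adj, rtDist_comm y x, or_self]

def rtGraphColoring (q n : ℕ) (D : Finset ℕ) :
    (rtGraph q n D).Coloring (rtCoords n D → ZMod q) :=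
  SimpleGraph.Coloring.mk (fun x i => x i) fun {x y} hadj hcol => by
    obtain ⟨hne, hmem⟩ := rtGraph_adj.mp hadj
    obtain ⟨i, hi, hw⟩ := exists_rtWeight_eq (sub_ne_zero.mpr hne)
    rw [rtDist, hw] at hmem
    have hiD : i ∈ rtCoords n D := by simpa [rtCoords] using hmem
    exact hi (sub_eq_zero.mpr (congrFun hcol ⟨i, hiD⟩))

noncomputable def topHomRtGraph (q n : ℕ) (D : Finset ℕ) :
    (⊤ : SimpleGraph (rtCoords n D → ZMod q)) →g rtGraph q n D where
  toFun c := Function.extend Subtype.val c 0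
  map_rel' {c c'} hne := by
    have hext := (Function.extend_injective Subtype.val_injective (0 : Fin n → ZMod q)).ne hne
    refine rtGraph_adj.mpr ⟨hext, rtWeight_mem_of_forall (sub_ne_zero.mpr hext) fun i hi => ?_⟩
    by_contra hiD
    have hnot : ¬∃ j : rtCoords n D, j.val = i := fun ⟨j, hj⟩ =>
      hiD (hj ▸ (Finset.mem_filter.mp j.prop).2)
    simp [Function.extend_apply' _ _ _ hnot] at hi

lemma rtGraph_chromaticNumber (q n : ℕ) [NeZero q] (D : Finset ℕ) :
    (rtGraph q n D).chromaticNumber = ((q ^ (rtCoords n D).card : ℕ) : ℕ∞) := by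
  rw [SimpleGraph.chromaticNumber_eq_card_of_coloring_of_hom (rtGraphColoring q n D)
    (topHomRtGraph q n D)]
  simp [ZMod.card]

theorem rtGraph_chromaticNumber_eq_iff_general (q n : ℕ) (hq : 2 ≤ q)
    (D₁ D₂ : Finset ℕ) (hD₁ : D₁ ⊆ Finset.Icc 1 n) (hD₂ : D₂ ⊆ Finset.Icc 1 n) :
    (rtGraph q n D₁).chromaticNumber = (rtGraph q n D₂).chromaticNumber ↔
      D₁.card = D₂.card := by
  have : NeZero q := ⟨by omega⟩
  rw [rtGraph_chromaticNumber, rtGraph_chromaticNumber, card_rtCoords hD₁, card_rtCoords hD₂,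
    Nat.cast_inj]
  exact (Nat.pow_right_injective hq).eq_iff

/-- The chromatic numbers of `G(Z_q^n, D₁)` and `G(Z_q^n, D₂)` agree iff `|D₁| = |D₂|`. -/
theorem rtGraph_chromaticNumber_eq_iff (q n : ℕ) (hq : 2 ≤ q) (hn : 1 ≤ n)
    (D₁ D₂ : Finset ℕ) (hD₁ : D₁ ⊆ Finset.Icc 1 n) (hD₂ : D₂ ⊆ Finset.Icc 1 n) :
    (rtGraph q n D₁).chromaticNumber = (rtGraph q n D₂).chromaticNumber ↔
      D₁.card = D₂.card :=
  rtGraph_chromaticNumber_eq_iff_general q n hq D₁ D₂ hD₁ hD₂
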